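/- arXiv:1807.11030 — 2 statements merged into one kernel-verified Lean document; each statement's English description precedes it below -/
import Mathlib

section
/- Every finitely generated strong $\mathcal{H}_Y$-ideal of $R$ is a $Y$-Hilbert ideal. Moreover, for every $a \in R$ the following are equivalent: (i) the principal ideal $\langle a \rangle$ is an $\mathcal{H}_Y$-ideal; (ii) $\langle a \rangle$ is a strong $\mathcal{H}_Y$-ideal; (iii) $\langle a \rangle$ is a $Y$-Hilbert ideal. -/
/-- `hSet Y S` is the set of primes (ideals) in `Y` containing the subset `S`. -/
def hSet {R : Type*} [CommRing R] (Y : Set (Ideal R)) (S : Set R) : Set (Ideal R) :=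
  {P ∈ Y | S ⊆ (P : Set R)}

/-- `kSet 𝒮` is the intersection of the ideals in `𝒮` (the whole ring if `𝒮 = ∅`). -/
def kSet {R : Type*} [CommRing R] (𝒮 : Set (Ideal R)) : Ideal R := sInf 𝒮

/-- An `ℋ_Y`-ideal. -/
def IsHIdeal {R : Type*} [CommRing R] (Y : Set (Ideal R)) (I : Ideal R) : Prop :=
  ∀ a ∈ I, ∀ b : R, hSet Y {a} ⊆ hSet Y {b} → b ∈ I

/-- A strong `ℋ_Y`-ideal. -/
def IsStrongHIdeal {R : Type*} [CommRing R] (Y : Set (Ideal R)) (I : Ideal R) : Prop :=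
  ∀ F : Set R, F.Finite → F ⊆ (I : Set R) → ∀ b : R, hSet Y F ⊆ hSet Y {b} → b ∈ I

/-- A `Y`-Hilbert ideal. -/
def IsYHilbert {R : Type*} [CommRing R] (Y : Set (Ideal R)) (I : Ideal R) : Prop :=
  I = kSet (hSet Y (I : Set R))

/-!
A Hilbert ideal `I = k(h(I))` absorbs every `b` lying in all primes of `Y` that contain some
subset of `I`, in particular a finite one, so it is a strong `ℋ_Y`-ideal. Conversely, if
`I = ⟨F⟩` with `F` finite then `h(I) = h(F)`, so `b ∈ k(h(I))` says exactly `h(F) ⊆ h(b)`, and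
the strong `ℋ_Y` property puts `b` in `I`. For `I = ⟨a⟩`, any finite `F ⊆ I` has
`h(a) = h(⟨a⟩) ⊆ h(F)`, which makes the plain and the strong `ℋ_Y` conditions agree.
-/

section HilbertIdeals

variable {R : Type*} [CommRing R] {Y : Set (Ideal R)}

lemma hSet_anti {S T : Set R} (hST : S ⊆ T) : hSet Y T ⊆ hSet Y S :=
  fun _ hP => ⟨hP.1, hST.trans hP.2⟩

@[simp]
lemma hSet_span (S : Set R) : hSet Y (Ideal.span S : Set R) = hSet Y S := by
  ext P
  simp only [hSet, Set.mem_ofPred_eq, SetLike.coe_subset_coe, Ideal.span_le]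

lemma mem_kSet_hSet_iff {S : Set R} {b : R} :
    b ∈ kSet (hSet Y S) ↔ hSet Y S ⊆ hSet Y {b} := by
  simp only [kSet, Submodule.mem_sInf]
  exact ⟨fun h P hP => ⟨hP.1, Set.singleton_subset_iff.mpr (h P hP)⟩,
    fun h P hP => Set.singleton_subset_iff.mp (h hP).2⟩

lemma le_kSet_hSet (I : Ideal R) : I ≤ kSet (hSet Y (I : Set R)) :=
  fun _ hb => mem_kSet_hSet_iff.mpr fun _ hP => ⟨hP.1, Set.singleton_subset_iff.mpr (hP.2 hb)⟩

lemma IsYHilbert.isStrongHIdeal {I : Ideal R} (hI : IsYHilbert Y I) : IsStrongHIdeal Y I := by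
  intro F _ hFI b hb
  rw [hI, mem_kSet_hSet_iff]
  exact (hSet_anti hFI).trans hb

lemma IsStrongHIdeal.isYHilbert_of_fg {I : Ideal R} (hI : IsStrongHIdeal Y I) (hfg : I.FG) :
    IsYHilbert Y I := by
  obtain ⟨s, rfl⟩ := hfg
  refine (le_kSet_hSet _).antisymm fun b hb => ?_
  rw [hSet_span, mem_kSet_hSet_iff] at hb
  exact hI s s.finite_toSet Ideal.subset_span b hb

lemma IsStrongHIdeal.isHIdeal {I : Ideal R} (hI : IsStrongHIdeal Y I) : IsHIdeal Y I :=
  fun a ha => hI {a} (Set.finite_singleton a) (Set.singleton_subset_iff.mpr ha)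

lemma IsHIdeal.isStrongHIdeal_span_singleton {a : R} (ha : IsHIdeal Y (Ideal.span {a})) :
    IsStrongHIdeal Y (Ideal.span {a}) := by
  intro F _ hFa b hb
  have hsub : hSet Y {a} ⊆ hSet Y F := by
    rw [← hSet_span]
    exact hSet_anti hFa
  exact ha a (Ideal.mem_span_singleton_self a) b (hsub.trans hb)

end HilbertIdeals

theorem stmt14_general {R : Type*} [CommRing R] (Y : Set (Ideal R)) :
    (∀ I : Ideal R, I.FG → IsStrongHIdeal Y I → IsYHilbert Y I) ∧
    (∀ a : R,
      [ IsHIdeal Y (Ideal.span {a}),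
        IsStrongHIdeal Y (Ideal.span {a}),
        IsYHilbert Y (Ideal.span {a}) ].TFAE) := by
  refine ⟨fun I hfg hI => hI.isYHilbert_of_fg hfg, fun a => ?_⟩
  tfae_have 1 → 2 := IsHIdeal.isStrongHIdeal_span_singleton
  tfae_have 2 → 3 := fun h => h.isYHilbert_of_fg ⟨{a}, by simp⟩
  tfae_have 3 → 1 := fun h => h.isStrongHIdeal.isHIdeal
  tfae_finish

/-- every finitely generated strong `ℋ_Y`-ideal is a `Y`-Hilbert
ideal; and for a principal ideal the notions `ℋ_Y`-ideal, strong `ℋ_Y`-ideal and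
`Y`-Hilbert ideal are equivalent. -/
theorem stmt14 {R : Type*} [CommRing R] (Y : Set (Ideal R))
    (hprime : ∀ P ∈ Y, P.IsPrime) :
    (∀ I : Ideal R, I.FG → IsStrongHIdeal Y I → IsYHilbert Y I) ∧
    (∀ a : R,
      [ IsHIdeal Y (Ideal.span {a}),
        IsStrongHIdeal Y (Ideal.span {a}),
        IsYHilbert Y (Ideal.span {a}) ].TFAE) :=
  stmt14_general Y
end

section
/- Let $P$ be a prime ideal of $R$ with $k(Y) \subseteq P$. Then the set of $\mathcal{H}_Y$-ideals contained in $P$ has maximal elements (with respect to inclusion), and every such maximal element is a prime ideal; the same holds for the set of strong $\mathcal{H}_Y$-ideals contained in $P$. Consequently, if $k(Y) = \langle 0 \rangle$, then every prime ideal of $R$ is either an $\mathcal{H}_Y$-ideal itself or contains a maximal $\mathcal{H}_Y$-ideal that is a prime $\mathcal{H}_Y$-ideal (and similarly in the strong case). -/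
/-!
If every member of `Y` is prime, then `P ∈ Y` contains `s * a ^ n` only if it contains `s` or
`a`. For a minimal prime `Q` over an `ℋ_Y`-ideal `I` and `a ∈ Q` there are `s ∉ Q` and `n` with
`s * a ^ n ∈ I`; if `h_Y(a) ⊆ h_Y(b)`, then `h_Y(s * a ^ n) ⊆ h_Y(s * b)`, so `s * b ∈ I ⊆ Q` and
`b ∈ Q`. Thus `Q` is again an `ℋ_Y`-ideal, and a maximal `ℋ_Y`-ideal `M ≤ P` equals any minimal
prime over `M` below `P`. Maximal elements exist by Zorn's lemma, since the defining condition
only involves finitely many elements at a time. The strong case is the same argument run on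
finite sets of elements.
-/

theorem Submodule.exists_mem_subset_of_finite_subset_sSup {R M : Type*} [Semiring R]
    [AddCommMonoid M] [Module R M] {c : Set (Submodule R M)} (hc : DirectedOn (· ≤ ·) c)
    (hne : c.Nonempty) {F : Set M} (hF : F.Finite) (hFc : F ⊆ (sSup c : Submodule R M)) :
    ∃ N ∈ c, F ⊆ N := by
  obtain ⟨N, hN, hFN⟩ := (CompleteLattice.isCompactElement_iff_le_of_directed_sSup_le _ _).1
    (finite_span_isCompactElement F hF) c hne hc (span_le.2 hFc)
  exact ⟨N, hN, span_le.1 hFN⟩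

namespace Ideal

variable {R : Type*} [CommRing R]

theorem exists_mul_pow_mem_of_mem_minimalPrimes {I Q : Ideal R} (hQ : Q ∈ I.minimalPrimes)
    {a : R} (ha : a ∈ Q) : ∃ s ∉ Q, ∃ n : ℕ, s * a ^ n ∈ I := by
  have := hQ.isPrime
  by_contra! h
  set S := Q.primeCompl ⊔ Submonoid.powers a
  have hIS : Disjoint (I : Set R) S := by
    refine Set.disjoint_left.2 fun x hxI hxS => ?_
    obtain ⟨s, hs, _, ⟨n, rfl⟩, rfl⟩ := Submonoid.mem_sup.1 hxS
    exact h s hs n hxI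
  obtain ⟨p, hp, hIp, hpS⟩ := exists_le_prime_disjoint I S hIS
  have hpQ : p ≤ Q := fun x hxp => by_contra fun hxQ =>
    Set.disjoint_left.1 hpS hxp (Submonoid.mem_sup_left hxQ)
  have hap : a ∉ p := fun hap =>
    Set.disjoint_left.1 hpS hap (Submonoid.mem_sup_right (Submonoid.mem_powers a))
  exact hap (hQ.2 ⟨hp, hIp⟩ hpQ ha)

theorem IsPrime.prod_mem_or_subset_of_forall_mul_pow_mem {P : Ideal R} (hP : P.IsPrime)
    {F : Finset R} {s : R → R} {n : R → ℕ} (h : ∀ a ∈ F, s a * a ^ n a ∈ P) :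
    ∏ a ∈ F, s a ∈ P ∨ (F : Set R) ⊆ P := by
  by_cases hs : ∃ a ∈ F, s a ∈ P
  · exact .inl (hP.prod_mem_iff.2 hs)
  · push Not at hs
    exact .inr fun a ha =>
      hP.mem_of_pow_mem (n a) ((hP.mem_or_mem (h a ha)).resolve_left (hs a ha))

end Ideal

section HIdealFor

variable {R : Type*} [CommRing R] {Y : Set (Ideal R)} {𝔉 : Set (Set R)}

/-- `ℋ_Y`-ideals tested on the sets of `𝔉`: singletons give `IsHIdeal`, finite sets give
`IsStrongHIdeal`. -/
def IsHIdealFor (𝔉 : Set (Set R)) (Y : Set (Ideal R)) (I : Ideal R) : Prop :=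
  ∀ F ∈ 𝔉, F ⊆ (I : Set R) → ∀ b : R, hSet Y F ⊆ hSet Y {b} → b ∈ I

theorem isHIdeal_iff_isHIdealFor {I : Ideal R} :
    IsHIdeal Y I ↔ IsHIdealFor (Set.range singleton) Y I := by
  constructor
  · rintro hI _ ⟨a, rfl⟩ ha b hb
    exact hI a (ha rfl) b hb
  · intro hI a ha b hb
    exact hI {a} ⟨a, rfl⟩ (Set.singleton_subset_iff.2 ha) b hb

theorem isStrongHIdeal_iff_isHIdealFor {I : Ideal R} :
    IsStrongHIdeal Y I ↔ IsHIdealFor {F | F.Finite} Y I :=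
  Iff.rfl

theorem isHIdealFor_kSet : IsHIdealFor 𝔉 Y (kSet Y) := by
  intro F _ hF b hb
  refine Ideal.mem_sInf.2 fun P hP => ?_
  exact (hb ⟨hP, hF.trans fun x hx => Ideal.mem_sInf.1 hx hP⟩).2 rfl

theorem isHIdealFor_sSup_of_isChain (h𝔉 : ∀ F ∈ 𝔉, F.Finite) {c : Set (Ideal R)}
    (hc : IsChain (· ≤ ·) c) (hne : c.Nonempty) (hcH : ∀ I ∈ c, IsHIdealFor 𝔉 Y I) :
    IsHIdealFor 𝔉 Y (sSup c) := by
  intro F hF hFc b hb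
  obtain ⟨I, hI, hFI⟩ :=
    Submodule.exists_mem_subset_of_finite_subset_sSup hc.directedOn hne (h𝔉 F hF) hFc
  exact le_sSup hI (hcH I hI F hF hFI b hb)

theorem exists_maximal_isHIdealFor_le (h𝔉 : ∀ F ∈ 𝔉, F.Finite) {P : Ideal R}
    (hkP : kSet Y ≤ P) : ∃ M, Maximal (fun J => IsHIdealFor 𝔉 Y J ∧ J ≤ P) M := by
  obtain ⟨M, -, hM⟩ := zorn_le_nonempty₀ {J | IsHIdealFor 𝔉 Y J ∧ J ≤ P}
    (fun c hcs hc y hy => ⟨sSup c,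
      ⟨isHIdealFor_sSup_of_isChain h𝔉 hc ⟨y, hy⟩ fun I hI => (hcs hI).1,
        sSup_le fun I hI => (hcs hI).2⟩, fun _ hz => le_sSup hz⟩)
    (kSet Y) ⟨isHIdealFor_kSet, hkP⟩
  exact ⟨M, hM⟩

theorem IsHIdealFor.of_mem_minimalPrimes (hY : ∀ P ∈ Y, P.IsPrime)
    (h𝔉 : ∀ F ∈ 𝔉, F.Finite) (h𝔉_image : ∀ F ∈ 𝔉, ∀ f : R → R, f '' F ∈ 𝔉)
    {I Q : Ideal R} (hI : IsHIdealFor 𝔉 Y I) (hQ : Q ∈ I.minimalPrimes) :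
    IsHIdealFor 𝔉 Y Q := by
  have hQp := hQ.isPrime
  choose! s hsQ n hsn using fun a (ha : a ∈ Q) =>
    Ideal.exists_mul_pow_mem_of_mem_minimalPrimes hQ ha
  intro F hF hFQ b hb
  set t := ∏ a ∈ (h𝔉 F hF).toFinset, s a
  have htQ : t ∉ Q := by
    rw [hQp.prod_mem_iff]
    rintro ⟨a, ha, hsa⟩
    exact hsQ a (hFQ ((h𝔉 F hF).mem_toFinset.1 ha)) hsa
  have htb : t * b ∈ I := by
    refine hI _ (h𝔉_image F hF fun a => s a * a ^ n a)
      (Set.image_subset_iff.2 fun a ha => hsn a (hFQ ha)) _ ?_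
    rintro P ⟨hPY, hPF⟩
    refine ⟨hPY, Set.singleton_subset_iff.2 ?_⟩
    rcases (hY P hPY).prod_mem_or_subset_of_forall_mul_pow_mem (F := (h𝔉 F hF).toFinset)
      (s := s) (n := n) fun a ha => hPF ⟨a, (h𝔉 F hF).mem_toFinset.1 ha, rfl⟩ with ht | hFP
    · exact P.mul_mem_right b ht
    · rw [Set.Finite.coe_toFinset] at hFP
      exact P.mul_mem_left t ((hb ⟨hPY, hFP⟩).2 rfl)
  exact (hQp.mem_or_mem (hQ.1.2 htb)).resolve_left htQ

theorem Maximal.isPrime_of_isHIdealFor (hY : ∀ P ∈ Y, P.IsPrime)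
    (h𝔉 : ∀ F ∈ 𝔉, F.Finite) (h𝔉_image : ∀ F ∈ 𝔉, ∀ f : R → R, f '' F ∈ 𝔉)
    {P M : Ideal R} [P.IsPrime] (hM : Maximal (fun J => IsHIdealFor 𝔉 Y J ∧ J ≤ P) M) :
    M.IsPrime := by
  obtain ⟨Q, hQ, hQP⟩ := Ideal.exists_minimalPrimes_le hM.prop.2
  have hQM : Q = M :=
    hM.eq_of_ge ⟨(hM.prop.1).of_mem_minimalPrimes hY h𝔉 h𝔉_image hQ, hQP⟩ hQ.1.2
  exact hQM ▸ hQ.isPrime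

theorem exists_maximal_isHIdealFor_and_isPrime (hY : ∀ P ∈ Y, P.IsPrime)
    (h𝔉 : ∀ F ∈ 𝔉, F.Finite) (h𝔉_image : ∀ F ∈ 𝔉, ∀ f : R → R, f '' F ∈ 𝔉)
    {P : Ideal R} (hP : P.IsPrime) (hkP : kSet Y ≤ P) :
    (∃ M : Ideal R, IsHIdealFor 𝔉 Y M ∧ M ≤ P ∧
      ∀ J : Ideal R, IsHIdealFor 𝔉 Y J → J ≤ P → M ≤ J → J = M) ∧
    (∀ M : Ideal R, IsHIdealFor 𝔉 Y M → M ≤ P →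
      (∀ J : Ideal R, IsHIdealFor 𝔉 Y J → J ≤ P → M ≤ J → J = M) → M.IsPrime) := by
  obtain ⟨M, hM⟩ := exists_maximal_isHIdealFor_le h𝔉 hkP
  refine ⟨⟨M, hM.prop.1, hM.prop.2, fun J hJ hJP hMJ => hM.eq_of_ge ⟨hJ, hJP⟩ hMJ⟩, ?_⟩
  intro N hN hNP hNmax
  exact Maximal.isPrime_of_isHIdealFor hY h𝔉 h𝔉_image
    ⟨⟨hN, hNP⟩, fun J hJ hNJ => (hNmax J hJ.1 hJ.2 hNJ).le⟩

end HIdealFor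

/-- for a prime `P ⊇ k(Y)`, the set of (strong) `ℋ_Y`-ideals
contained in `P` has maximal elements, and every such maximal element is prime;
consequently, if `k(Y) = ⟨0⟩`, every prime ideal is either a (strong) `ℋ_Y`-ideal
or contains a maximal (strong) `ℋ_Y`-ideal which is a prime (strong)
`ℋ_Y`-ideal. -/
theorem stmt19 {R : Type*} [CommRing R] (Y : Set (Ideal R))
    (hprime : ∀ P ∈ Y, P.IsPrime) :
    (∀ P : Ideal R, P.IsPrime → kSet Y ≤ P →
      (∃ M : Ideal R, IsHIdeal Y M ∧ M ≤ P ∧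
        ∀ J : Ideal R, IsHIdeal Y J → J ≤ P → M ≤ J → J = M) ∧
      (∀ M : Ideal R, IsHIdeal Y M → M ≤ P →
        (∀ J : Ideal R, IsHIdeal Y J → J ≤ P → M ≤ J → J = M) → M.IsPrime) ∧
      (∃ M : Ideal R, IsStrongHIdeal Y M ∧ M ≤ P ∧
        ∀ J : Ideal R, IsStrongHIdeal Y J → J ≤ P → M ≤ J → J = M) ∧
      (∀ M : Ideal R, IsStrongHIdeal Y M → M ≤ P →
        (∀ J : Ideal R, IsStrongHIdeal Y J → J ≤ P → M ≤ J → J = M) →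
        M.IsPrime)) ∧
    (kSet Y = ⊥ → ∀ Q : Ideal R, Q.IsPrime →
      (IsHIdeal Y Q ∨ ∃ M : Ideal R, M.IsPrime ∧ IsHIdeal Y M ∧ M ≤ Q ∧
        ∀ J : Ideal R, IsHIdeal Y J → J ≤ Q → M ≤ J → J = M) ∧
      (IsStrongHIdeal Y Q ∨ ∃ M : Ideal R, M.IsPrime ∧ IsStrongHIdeal Y M ∧
        M ≤ Q ∧
        ∀ J : Ideal R, IsStrongHIdeal Y J → J ≤ Q → M ≤ J → J = M))  := by
  have hH := fun P (hP : P.IsPrime) (hkP : kSet Y ≤ P) =>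
    exists_maximal_isHIdealFor_and_isPrime (𝔉 := Set.range singleton) hprime
      (by rintro _ ⟨a, rfl⟩; exact Set.finite_singleton a)
      (by rintro _ ⟨a, rfl⟩ f; exact ⟨f a, (Set.image_singleton).symm⟩) hP hkP
  have hS := fun P (hP : P.IsPrime) (hkP : kSet Y ≤ P) =>
    exists_maximal_isHIdealFor_and_isPrime (𝔉 := {F | F.Finite}) hprime
      (fun _ hF => hF) (fun _ hF f => hF.image f) hP hkP
  simp only [← isHIdeal_iff_isHIdealFor, ← isStrongHIdeal_iff_isHIdealFor] at hH hS
  refine ⟨fun P hP hkP => ⟨(hH P hP hkP).1, (hH P hP hkP).2, (hS P hP hkP).1, (hS P hP hkP).2⟩,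
    fun hk Q hQ => ?_⟩
  have hkQ : kSet Y ≤ Q := hk ▸ bot_le
  obtain ⟨⟨M, hM⟩, hMprime⟩ := hH Q hQ hkQ
  obtain ⟨⟨N, hN⟩, hNprime⟩ := hS Q hQ hkQ
  exact ⟨.inr ⟨M, hMprime M hM.1 hM.2.1 hM.2.2, hM⟩, .inr ⟨N, hNprime N hN.1 hN.2.1 hN.2.2, hN⟩⟩
end
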